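/- arXiv:2411.00905 — 4 statements merged into one kernel-verified Lean document; each statement's English description precedes it below -/
import Mathlib

section
/- Let G be a finite group and Ĝ a complete set of pairwise inequivalent irreducible complex matrix representations of G. Then for every u : G → ℂ and every g ∈ G, the Fourier inversion formula holds: u(g) = (1/|G|) ∑_{ρ∈Ĝ} d_ρ · Tr(ρ(g⁻¹) · F(u)(ρ)), where d_ρ is the degree of ρ and F(u)(ρ) = ∑_{h∈G} u(h) ρ(h). -/
/-- A matrix representation of `G`: every `ρ g` is invertible and `ρ` is
multiplicative. -/
def IsMatRep {G : Type*} [Group G] {n : Type*} [Fintype n] [DecidableEq n]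
    (ρ : G → Matrix n n ℂ) : Prop :=
  (∀ g, IsUnit (ρ g)) ∧ ∀ g h : G, ρ (g * h) = ρ g * ρ h

/-- Irreducibility: the only subspaces of `ℂ^n` invariant under all `ρ g` are
`⊥` and `⊤`. -/
def IsIrredRep {G : Type*} [Group G] {n : Type*} [Fintype n] [DecidableEq n]
    (ρ : G → Matrix n n ℂ) : Prop :=
  ∀ W : Submodule ℂ (n → ℂ), (∀ g : G, ∀ x ∈ W, (ρ g).mulVec x ∈ W) → W = ⊥ ∨ W = ⊤

/-- Equivalence of matrix representations: `ρ(g) = T⁻¹ σ(g) T` for a fixed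
invertible `T` (encoded by a two-sided inverse pair `T, T'`). -/
def RepEquiv {G : Type*} [Group G] {n m : Type*} [Fintype n] [DecidableEq n]
    [Fintype m] [DecidableEq m]
    (ρ : G → Matrix n n ℂ) (σ : G → Matrix m m ℂ) : Prop :=
  ∃ (T : Matrix m n ℂ) (T' : Matrix n m ℂ),
    T * T' = 1 ∧ T' * T = 1 ∧ ∀ g : G, ρ g = T' * σ g * T

/-!
Expanding the trace and exchanging the sums, the inversion formula reduces to
`∑ ρ, d_ρ · tr ρ(x) = |G| · [x = 1]`, the character of the regular representation `ℂ[G]`.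
By Maschke, `ℂ[G]` is a finite direct sum of simple submodules; by completeness of `Ĝ` each of
them is equivalent to some `ρ ∈ Ĝ`, so the regular character is a sum of characters of `Ĝ`.
Orthogonality of irreducible characters then shows that `ρ` occurs exactly
`⟨χ_reg, χ_ρ⟩ = χ_ρ(1) = d_ρ` times.
-/

open Finset Matrix MonoidAlgebra

namespace IsMatRep

variable {G : Type*} [Group G] {n m : Type*} [Fintype n] [DecidableEq n] [Fintype m]
  [DecidableEq m] {ρ : G → Matrix n n ℂ} {σ : G → Matrix m m ℂ}

lemma map_one (hρ : IsMatRep ρ) : ρ 1 = 1 :=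
  (hρ.1 1).mul_left_cancel (by rw [← hρ.2, one_mul, mul_one])

noncomputable def toRepresentation (hρ : IsMatRep ρ) : Representation ℂ G (n → ℂ) where
  toFun g := toLin' (ρ g)
  map_one' := by rw [hρ.map_one, toLin'_one]; rfl
  map_mul' g h := by rw [hρ.2, toLin'_mul, Module.End.mul_eq_comp]

lemma character_toRepresentation (hρ : IsMatRep ρ) (g : G) :
    hρ.toRepresentation.character g = (ρ g).trace :=
  trace_toLin'_eq (ρ g)

lemma isIrreducible_toRepresentation [Nonempty n] (hρ : IsMatRep ρ) (hirr : IsIrredRep ρ) :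
    hρ.toRepresentation.IsIrreducible where
  exists_pair_ne := ⟨⊥, ⊤, fun h => bot_ne_top (congrArg Subrepresentation.toSubmodule h)⟩
  eq_bot_or_eq_top W := by
    rcases hirr W.toSubmodule fun g x hx => W.apply_mem_toSubmodule g hx with h | h
    · exact .inl (Subrepresentation.toSubmodule_injective h)
    · exact .inr (Subrepresentation.toSubmodule_injective h)

lemma repEquiv_of_equiv (hρ : IsMatRep ρ) (hσ : IsMatRep σ)
    (φ : hσ.toRepresentation.Equiv hρ.toRepresentation) : RepEquiv σ ρ := by
  set e := φ.toLinearEquiv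
  refine ⟨LinearMap.toMatrix' e.toLinearMap, LinearMap.toMatrix' e.symm.toLinearMap,
    ?_, ?_, fun g => ?_⟩
  · rw [← LinearMap.toMatrix'_comp, LinearEquiv.comp_symm, LinearMap.toMatrix'_id]
  · rw [← LinearMap.toMatrix'_comp, LinearEquiv.symm_comp, LinearMap.toMatrix'_id]
  · apply toLin'.injective
    rw [toLin'_mul, toLin'_mul, toLin'_toMatrix', toLin'_toMatrix']
    have := φ.symm.conj_apply_self g
    rw [LinearEquiv.conj_apply] at this
    exact this.symm

open scoped Classical in
theorem sum_trace_mul_trace_inv [Fintype G] [Nonempty n] [Nonempty m]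
    (hρ : IsMatRep ρ) (hσ : IsMatRep σ) (hρirr : IsIrredRep ρ) (hσirr : IsIrredRep σ) :
    ∑ g, (ρ g).trace * (σ g⁻¹).trace =
      if Nonempty (hσ.toRepresentation.Equiv hρ.toRepresentation) then (Fintype.card G : ℂ)
      else 0 := by
  have := hρ.isIrreducible_toRepresentation hρirr
  have := hσ.isIrreducible_toRepresentation hσirr
  have hG : (Nat.card G : ℂ) ≠ 0 := NeZero.ne _
  have := invertibleOfNonzero hG
  have horth := hρ.toRepresentation.char_orthonormal hσ.toRepresentation
  simp only [character_toRepresentation] at horth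
  rw [inv_mul_eq_iff_eq_mul₀ hG] at horth
  rw [horth, Nat.card_eq_fintype_card]
  split_ifs <;> simp

end IsMatRep

lemma RepEquiv.trace_eq {G : Type*} [Group G] {n m : Type*} [Fintype n] [DecidableEq n]
    [Fintype m] [DecidableEq m] {ρ : G → Matrix n n ℂ} {σ : G → Matrix m m ℂ}
    (h : RepEquiv ρ σ) (g : G) : (ρ g).trace = (σ g).trace := by
  obtain ⟨T, T', hTT', -, hg⟩ := h
  rw [hg, trace_mul_cycle, hTT', one_mul]

namespace Representation

variable {k G : Type*} [Field k] [Group G]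

lemma IsIrreducible.nontrivial {V : Type*} [AddCommGroup V] [Module k V]
    (π : Representation k G V) [π.IsIrreducible] : Nontrivial V := by
  by_contra h
  rw [not_nontrivial_iff_subsingleton] at h
  exact bot_ne_top (Subrepresentation.toSubmodule_injective (Subsingleton.elim _ _) :
    (⊥ : Subrepresentation π) = ⊤)

variable {M : Type*} [AddCommGroup M] [Module k M] [Module k[G] M] [IsScalarTower k k[G] M]

lemma ofModule'_apply (g : G) (x : M) :
    ofModule' (k := k) M g x = MonoidAlgebra.of k G g • x := rfl

lemma isIrreducible_ofModule' [IsSimpleModule k[G] M] :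
    (ofModule' (k := k) (G := G) M).IsIrreducible := by
  have : Nontrivial M := IsSimpleModule.nontrivial k[G] M
  refine { exists_pair_ne := ⟨⊥, ⊤, fun h => ?_⟩, eq_bot_or_eq_top := fun W => ?_ }
  · exact bot_ne_top (congrArg Subrepresentation.toSubmodule h)
  · let W' := submoduleOfSMulMem W.toSubmodule fun g v hv => W.apply_mem_toSubmodule g hv
    rcases IsSimpleOrder.eq_bot_or_eq_top W' with h | h
    · left
      exact Subrepresentation.toSubmodule_injective (SetLike.ext fun x => SetLike.ext_iff.mp h x)
    · right
      exact Subrepresentation.toSubmodule_injective (SetLike.ext fun x => SetLike.ext_iff.mp h x)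

section Matrix

variable {V : Type*} [AddCommGroup V] [Module ℂ V]
  (π : Representation ℂ G V) {n : Type*} [Fintype n] [DecidableEq n] (b : Module.Basis n ℂ V)

lemma isMatRep_toMatrix : IsMatRep fun g => LinearMap.toMatrix b b (π g) :=
  ⟨fun g => ((π.asGroupHom g).isUnit.map (LinearMap.toMatrixAlgEquiv b)),
    fun g h => by simp only [map_mul, LinearMap.toMatrix_mul]⟩

lemma isIrredRep_toMatrix [π.IsIrreducible] :
    IsIrredRep fun g => LinearMap.toMatrix b b (π g) := by
  intro W hW
  let e := b.equivFun
  let W' : Subrepresentation π :=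
    ⟨W.comap e.toLinearMap, fun g v hv => by
      simpa [e, LinearMap.toMatrix_mulVec_repr] using hW g _ hv⟩
  have hW : W = W'.toSubmodule.map e.toLinearMap :=
    (Submodule.map_comap_eq_of_surjective e.surjective W).symm
  rcases eq_bot_or_eq_top W' with h | h <;> rw [hW, h]
  · exact .inl (Submodule.map_bot _)
  · exact .inr ((Submodule.map_top _).trans (LinearEquiv.range e))

end Matrix

end Representation
section SemisimpleDecomposition

variable {k G : Type*} [Field k] [Group G] {M : Type*} [AddCommGroup M] [Module k M]
  [Module k[G] M] [IsScalarTower k k[G] M]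

instance [FiniteDimensional k M] (S : Submodule k[G] M) : FiniteDimensional k S :=
  inferInstanceAs (FiniteDimensional k (S.restrictScalars k))

theorem exists_finset_isSimpleModule_character_eq_sum [Finite G] [NeZero (Nat.card G : k)]
    [FiniteDimensional k M] :
    ∃ s : Finset (Submodule k[G] M), (∀ S ∈ s, IsSimpleModule k[G] S) ∧
      ∀ g, (Representation.ofModule' (k := k) (G := G) M).character g =
        ∑ S ∈ s, (Representation.ofModule' (k := k) (G := G) S).character g := by
  classical
  obtain ⟨s, hind, hsup, hsimple⟩ :=
    IsSemisimpleModule.exists_sSupIndep_sSup_simples_eq_top k[G] M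
  have : IsNoetherian k[G] M := isNoetherian_of_tower k inferInstance
  obtain ⟨t, rfl⟩ := (WellFoundedGT.finite_of_sSupIndep hind).exists_finset_coe
  have hint : DirectSum.IsInternal fun S : t => (S : Submodule k[G] M) :=
    (DirectSum.isInternal_submodule_iff_iSupIndep_and_iSup_eq_top _).mpr
      ⟨(sSupIndep_iff _).mp hind, by rw [← hsup, sSup_eq_iSup']; rfl⟩
  refine ⟨t, hsimple, fun g => ?_⟩
  rw [← Finset.sum_coe_sort]
  -- `IsInternal` only sees carriers, so `hint` is also a decomposition into `k`-subspaces.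
  exact LinearMap.trace_eq_sum_trace_restrict (N := fun S : t => S.1.restrictScalars k) hint
    (fun S x hx => S.1.smul_mem (MonoidAlgebra.of k G g) hx)

end SemisimpleDecomposition

section RegularCharacter

variable {k G : Type*} [Field k] [Group G] [Fintype G]

instance : FiniteDimensional k k[G] := .of_basis (MonoidAlgebra.basis G k)

theorem character_ofModule'_monoidAlgebra [DecidableEq G] (g : G) :
    (Representation.ofModule' (k := k) (G := G) k[G]).character g =
      if g = 1 then (Fintype.card G : k) else 0 := by
  have hdiag (h : G) : LinearMap.toMatrix (basis G k) (basis G k)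
      (Representation.ofModule' (k := k) (G := G) k[G] g) h h = if g = 1 then 1 else 0 := by
    rw [LinearMap.toMatrix_apply, basis_apply, Representation.ofModule'_apply,
      MonoidAlgebra.of_apply, smul_eq_mul, single_mul_single, one_mul]
    change Finsupp.single (g * h) (1 : k) h = _
    simp [Finsupp.single_apply]
  rw [Representation.character, LinearMap.trace_eq_matrix_trace k (basis G k), Matrix.trace]
  simp only [Matrix.diag, hdiag]
  split_ifs <;> simp

end RegularCharacter

section CompleteFamily

variable {G : Type*} [Group G] {ι : Type*} {d : ι → ℕ}
  {ρ : (i : ι) → G → Matrix (Fin (d i)) (Fin (d i)) ℂ}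

theorem exists_character_eq_trace (hrep : ∀ i, IsMatRep (ρ i))
    (hcomplete : ∀ (k : ℕ) (σ : G → Matrix (Fin k) (Fin k) ℂ),
      IsMatRep σ → IsIrredRep σ → ∃! i : ι, RepEquiv σ (ρ i))
    {V : Type*} [AddCommGroup V] [Module ℂ V] [FiniteDimensional ℂ V]
    (π : Representation ℂ G V) [π.IsIrreducible] :
    ∃ i, 0 < d i ∧ ∀ g, π.character g = (ρ i g).trace := by
  let b := Module.finBasis ℂ V
  obtain ⟨i, hi, -⟩ := hcomplete _ _ (π.isMatRep_toMatrix b) (π.isIrredRep_toMatrix b)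
  have htrace (g : G) : π.character g = (ρ i g).trace := by
    rw [← hi.trace_eq, Representation.character, LinearMap.trace_eq_matrix_trace ℂ b]
  refine ⟨i, ?_, htrace⟩
  have := Representation.IsIrreducible.nontrivial π
  have h1 := htrace 1
  rw [π.char_one, (hrep i).map_one, trace_one, Fintype.card_fin, Nat.cast_inj] at h1
  exact h1 ▸ Module.finrank_pos

variable [Fintype G]

theorem sum_trace_mul_trace_inv_eq_ite [DecidableEq ι] (hrep : ∀ i, IsMatRep (ρ i))
    (hirr : ∀ i, IsIrredRep (ρ i)) (hineq : ∀ i j, i ≠ j → ¬ RepEquiv (ρ i) (ρ j))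
    {i : ι} (hi : 0 < d i) (j : ι) :
    ∑ g, (ρ i g).trace * (ρ j g⁻¹).trace = if i = j then (Fintype.card G : ℂ) else 0 := by
  -- `Ĝ` may contain the degree-0 representation, whose trace vanishes.
  rcases Nat.eq_zero_or_pos (d j) with hj | hj
  · have hij : i ≠ j := by rintro rfl; omega
    have : IsEmpty (Fin (d j)) := by rw [hj]; infer_instance
    simp [hij, Matrix.trace]
  · have : Nonempty (Fin (d i)) := ⟨⟨0, hi⟩⟩
    have : Nonempty (Fin (d j)) := ⟨⟨0, hj⟩⟩
    rw [(hrep i).sum_trace_mul_trace_inv (hrep j) (hirr i) (hirr j)]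
    by_cases hij : i = j
    · subst hij
      rw [if_pos ⟨.refl _⟩, if_pos rfl]
    · rw [if_neg hij, if_neg]
      exact fun ⟨φ⟩ => hineq j i (Ne.symm hij) ((hrep i).repEquiv_of_equiv (hrep j) φ)

end CompleteFamily

section Multiplicity

variable {G : Type*} [Group G] [Fintype G] [DecidableEq G] {ι : Type*} [DecidableEq ι]
  {d : ι → ℕ} {ρ : (i : ι) → G → Matrix (Fin (d i)) (Fin (d i)) ℂ}
  {κ : Type*} [Fintype κ] (c : κ → ι)

theorem degree_eq_card_fiber (hrep : ∀ i, IsMatRep (ρ i))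
    (horth : ∀ k j, ∑ g, (ρ (c k) g).trace * (ρ j g⁻¹).trace =
      if c k = j then (Fintype.card G : ℂ) else 0)
    (hreg : ∀ g, (if g = 1 then (Fintype.card G : ℂ) else 0) = ∑ k, (ρ (c k) g).trace)
    (j : ι) : (d j : ℂ) = #{k | c k = j} := by
  have hG : (Fintype.card G : ℂ) ≠ 0 := Nat.cast_ne_zero.mpr Fintype.card_ne_zero
  apply mul_left_cancel₀ hG
  calc (Fintype.card G : ℂ) * d j
      = ∑ g, (if g = 1 then (Fintype.card G : ℂ) else 0) * (ρ j g⁻¹).trace := by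
        simp [(hrep j).map_one]
    _ = ∑ k, ∑ g, (ρ (c k) g).trace * (ρ j g⁻¹).trace := by
        simp_rw [hreg, Finset.sum_mul]
        exact Finset.sum_comm
    _ = Fintype.card G * #{k | c k = j} := by
        simp_rw [horth]
        rw [← Finset.sum_filter, Finset.sum_const, nsmul_eq_mul, mul_comm]

theorem sum_degree_mul_trace_of_regular [Fintype ι] (hrep : ∀ i, IsMatRep (ρ i))
    (horth : ∀ k j, ∑ g, (ρ (c k) g).trace * (ρ j g⁻¹).trace =
      if c k = j then (Fintype.card G : ℂ) else 0)
    (hreg : ∀ g, (if g = 1 then (Fintype.card G : ℂ) else 0) = ∑ k, (ρ (c k) g).trace)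
    (x : G) :
    ∑ i, (d i : ℂ) * (ρ i x).trace = if x = 1 then (Fintype.card G : ℂ) else 0 := by
  rw [hreg x, ← Finset.sum_fiberwise' Finset.univ c fun i => (ρ i x).trace]
  simp_rw [degree_eq_card_fiber c hrep horth hreg, Finset.sum_const, nsmul_eq_mul]

end Multiplicity

theorem sum_degree_mul_trace {G : Type*} [Group G] [Fintype G] [DecidableEq G]
    {ι : Type*} [Fintype ι]
    {d : ι → ℕ} {ρ : (i : ι) → G → Matrix (Fin (d i)) (Fin (d i)) ℂ}
    (hrep : ∀ i, IsMatRep (ρ i)) (hirr : ∀ i, IsIrredRep (ρ i))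
    (hineq : ∀ i j, i ≠ j → ¬ RepEquiv (ρ i) (ρ j))
    (hcomplete : ∀ (k : ℕ) (σ : G → Matrix (Fin k) (Fin k) ℂ),
      IsMatRep σ → IsIrredRep σ → ∃! i : ι, RepEquiv σ (ρ i))
    (x : G) :
    ∑ i, (d i : ℂ) * (ρ i x).trace = if x = 1 then (Fintype.card G : ℂ) else 0 := by
  classical
  obtain ⟨s, hsimple, hchar⟩ :=
    exists_finset_isSimpleModule_character_eq_sum (k := ℂ) (G := G) (M := ℂ[G])
  have (S : s) : (Representation.ofModule' (k := ℂ) (G := G) S.1).IsIrreducible :=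
    have := hsimple S S.2
    Representation.isIrreducible_ofModule'
  choose c hpos hc using fun S : s =>
    exists_character_eq_trace hrep hcomplete (Representation.ofModule' (k := ℂ) (G := G) S.1)
  refine sum_degree_mul_trace_of_regular c hrep
    (fun S => sum_trace_mul_trace_inv_eq_ite hrep hirr hineq (hpos S)) (fun g => ?_) x
  rw [← character_ofModule'_monoidAlgebra, hchar, ← Finset.sum_coe_sort]
  exact Finset.sum_congr rfl fun S _ => hc S g

/-- Let `G` be a finite group and `(ρ i)_{i : ι}` a complete set of
pairwise inequivalent irreducible complex matrix representations of `G` (degrees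
`d i`).  Then for every `u : G → ℂ` and `g ∈ G` the Fourier inversion formula holds:
`u(g) = (1/|G|) ∑_{ρ∈Ĝ} d_ρ · Tr(ρ(g⁻¹) · F(u)(ρ))` where `F(u)(ρ) = ∑_h u(h) ρ(h)`. -/
theorem stmt6 {G : Type*} [Group G] [Fintype G]
    {ι : Type*} [Fintype ι] (d : ι → ℕ)
    (ρ : (i : ι) → G → Matrix (Fin (d i)) (Fin (d i)) ℂ)
    (hrep : ∀ i, IsMatRep (ρ i))
    (hirr : ∀ i, IsIrredRep (ρ i))
    (hineq : ∀ i j, i ≠ j → ¬ RepEquiv (ρ i) (ρ j))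
    (hcomplete : ∀ (k : ℕ) (σ : G → Matrix (Fin k) (Fin k) ℂ),
      IsMatRep σ → IsIrredRep σ → ∃! i : ι, RepEquiv σ (ρ i))
    (u : G → ℂ) (g : G) :
    u g = (1 / (Fintype.card G : ℂ)) *
      ∑ i : ι, (d i : ℂ) * Matrix.trace (ρ i g⁻¹ * ∑ h : G, u h • ρ i h) := by
  classical
  have hF (i : ι) :
      (ρ i g⁻¹ * ∑ h : G, u h • ρ i h).trace = ∑ h, u h * (ρ i (g⁻¹ * h)).trace := by
    simp_rw [Matrix.mul_sum, Matrix.trace_sum, Matrix.mul_smul, Matrix.trace_smul, smul_eq_mul,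
      ← (hrep i).2]
  calc u g = (1 / (Fintype.card G : ℂ)) *
        ∑ h, u h * ∑ i, (d i : ℂ) * (ρ i (g⁻¹ * h)).trace := by
        simp_rw [sum_degree_mul_trace hrep hirr hineq hcomplete, inv_mul_eq_one, eq_comm (a := g),
          mul_ite, mul_zero, Finset.sum_ite_eq', Finset.mem_univ, if_true]
        field_simp
    _ = _ := by
        simp_rw [hF, Finset.mul_sum]
        rw [Finset.sum_comm]
        exact Finset.sum_congr rfl fun i _ => Finset.sum_congr rfl fun h _ => by ring
end

section
/- Let G be a finite group, Ĝ a complete set of pairwise inequivalent irreducible complex matrix representations of G, S a finite set, and A : G → ℂ^{S×S} a convolution kernel. If λ ∈ ℂ is an eigenvalue of the linear map u ↦ A * u on the space of functions u : G → ℂ^S, then there exists ρ ∈ Ĝ such that λ is an eigenvalue of the |S|d_ρ × |S|d_ρ matrix F(A)(ρ). -/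
/-- The group convolution of a kernel `A : G → ℂ^{S×S}` with `u : G → ℂ^S`:
`(A*u)(g) = ∑_{h∈G} A(h) u(h⁻¹ g)`. -/
noncomputable def groupConv {G : Type*} [Group G] [Fintype G] {S : Type*} [Fintype S]
    (A : G → Matrix S S ℂ) (u : G → S → ℂ) : G → S → ℂ :=
  fun g s => ∑ h : G, ∑ s' : S, A h s s' * u (h⁻¹ * g) s'

/-- The (blockwise) generalized Fourier transform of a kernel `A : G → ℂ^{S×S}`
at a representation `σ` of degree `k`: the `|S|k × |S|k` matrix with entries
`F(A)_{(s,i),(s',j)}(σ) = (F(A_{s,s'}))_{i,j}(σ)`. -/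
noncomputable def kernelFT {G : Type*} [Group G] [Fintype G] {S : Type*} [Fintype S] {k : ℕ}
    (A : G → Matrix S S ℂ) (σ : G → Matrix (Fin k) (Fin k) ℂ) :
    Matrix (S × Fin k) (S × Fin k) ℂ :=
  Matrix.of fun p q => ∑ g : G, A g p.1 q.1 * σ g p.2 q.2


/-!
The Fourier transform turns convolution into matrix multiplication, so for an eigenvector `u` of
`u ↦ A * u` every column of `F(u)(ρ)` is either zero or an eigenvector of `F(A)(ρ)` for the same
eigenvalue. If all of them vanished, `u` would have zero Fourier transform at every `ρ ∈ Ĝ`, hence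
be zero: by Maschke's theorem `ℂ[G]` is semisimple, so an element acting trivially on every simple
left ideal is zero, and each simple left ideal, written in a basis, is an irreducible matrix
representation equivalent to some `ρ ∈ Ĝ`.
-/

open MonoidAlgebra Matrix

open scoped Kronecker

theorem isMatRep_monoidHom {G : Type*} [Group G] {n : Type*} [Fintype n] [DecidableEq n]
    (σ : G →* Matrix n n ℂ) : IsMatRep σ :=
  ⟨fun g => (Group.isUnit g).map σ, σ.map_mul⟩

theorem RepEquiv.sum_smul_eq_zero {G : Type*} [Group G] [Fintype G]
    {n m : Type*} [Fintype n] [DecidableEq n] [Fintype m] [DecidableEq m]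
    {σ : G → Matrix n n ℂ} {ρ : G → Matrix m m ℂ} (h : RepEquiv σ ρ) {w : G → ℂ}
    (hw : ∑ g, w g • ρ g = 0) : ∑ g, w g • σ g = 0 := by
  obtain ⟨T, T', -, -, hσ⟩ := h
  calc ∑ g, w g • σ g = T' * (∑ g, w g • ρ g) * T := by
        simp only [hσ, Matrix.mul_sum, Matrix.sum_mul, Matrix.mul_smul, Matrix.smul_mul]
    _ = 0 := by rw [hw, Matrix.mul_zero, Matrix.zero_mul]

theorem eq_zero_of_forall_isSimpleModule_mul_eq_zero {R : Type*} [Ring R] [IsSemisimpleRing R]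
    {x : R} (hx : ∀ W : Submodule R R, IsSimpleModule R W → ∀ y ∈ W, x * y = 0) : x = 0 := by
  have h1 : (1 : R) ∈ sSup {W : Submodule R R | IsSimpleModule R W} := by
    rw [IsSemisimpleModule.sSup_simples_eq_top]
    trivial
  rw [sSup_eq_iSup'] at h1
  simpa using Submodule.iSup_induction _ (motive := fun y => x * y = 0) h1
    (fun W => hx W W.2) (mul_zero x) (fun y z hy hz => by rw [mul_add, hy, hz, add_zero])

section MatrixRepOfBasis

variable {G : Type*} [Group G] {M : Type*} [AddCommGroup M] [Module ℂ M]
  [Module (MonoidAlgebra ℂ G) M] [IsScalarTower ℂ (MonoidAlgebra ℂ G) M]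
  {n : Type*} [Fintype n] [DecidableEq n]

noncomputable def matrixRepOfBasis (b : Module.Basis n ℂ M) : G →* Matrix n n ℂ :=
  (lift ℂ (Matrix n n ℂ) G).symm
    ((LinearMap.toMatrixAlgEquiv b).toAlgHom.comp (Algebra.lsmul ℂ ℂ M))

theorem lift_matrixRepOfBasis (b : Module.Basis n ℂ M) (x : MonoidAlgebra ℂ G) :
    lift ℂ (Matrix n n ℂ) G (matrixRepOfBasis b) x =
      LinearMap.toMatrixAlgEquiv b (Algebra.lsmul ℂ ℂ M x) :=
  DFunLike.congr_fun ((lift ℂ (Matrix n n ℂ) G).apply_symm_apply _) x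

theorem matrixRepOfBasis_mulVec_repr (b : Module.Basis n ℂ M) (g : G) (m : M) :
    matrixRepOfBasis b g *ᵥ b.repr m = b.repr (of ℂ G g • m) :=
  LinearMap.toMatrix_mulVec_repr b b (Algebra.lsmul ℂ ℂ M (of ℂ G g)) m

theorem isIrredRep_matrixRepOfBasis [IsSimpleModule (MonoidAlgebra ℂ G) M]
    (b : Module.Basis n ℂ M) : IsIrredRep (matrixRepOfBasis (G := G) b) := by
  intro U hU
  let W : Submodule ℂ M := U.comap (b.equivFun : M →ₗ[ℂ] n → ℂ)
  have hW (g : G) (m : M) (hm : m ∈ W) : of ℂ G g • m ∈ W := by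
    change b.equivFun (of ℂ G g • m) ∈ U
    rw [Module.Basis.equivFun_apply, ← matrixRepOfBasis_mulVec_repr]
    exact hU g _ hm
  have hmem (v : n → ℂ) : v ∈ U ↔ b.equivFun.symm v ∈ submoduleOfSMulMem W hW := by
    change v ∈ U ↔ b.equivFun (b.equivFun.symm v) ∈ U
    rw [LinearEquiv.apply_symm_apply]
  rcases eq_bot_or_eq_top (submoduleOfSMulMem W hW) with h | h
  · refine Or.inl (eq_bot_iff.mpr fun v hv => ?_)
    rwa [hmem, h, Submodule.mem_bot, LinearEquiv.map_eq_zero_iff] at hv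
  · exact Or.inr (eq_top_iff.mpr fun v _ => (hmem v).mpr (h ▸ Submodule.mem_top))

end MatrixRepOfBasis

theorem eq_zero_of_sum_smul_eq_zero {G : Type*} [Group G] [Fintype G] {ι : Type*} {d : ι → ℕ}
    {ρ : (i : ι) → G → Matrix (Fin (d i)) (Fin (d i)) ℂ}
    (hcomplete : ∀ (k : ℕ) (σ : G → Matrix (Fin k) (Fin k) ℂ),
      IsMatRep σ → IsIrredRep σ → ∃ i, RepEquiv σ (ρ i))
    {w : G → ℂ} (hw : ∀ i, ∑ g, w g • ρ i g = 0) : w = 0 := by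
  let x : MonoidAlgebra ℂ G := ofCoeff (Finsupp.equivFunOnFinite.symm w)
  suffices hx : x = 0 by
    ext g
    simpa [x] using congrArg (fun y => y.coeff g) hx
  refine eq_zero_of_forall_isSimpleModule_mul_eq_zero fun W _ y hy => ?_
  let b := Module.finBasis ℂ W
  obtain ⟨i, hi⟩ := hcomplete _ (matrixRepOfBasis (G := G) b) (isMatRep_monoidHom _)
    (isIrredRep_matrixRepOfBasis b)
  have hx : Algebra.lsmul ℂ ℂ W x = 0 := by
    apply (LinearMap.toMatrixAlgEquiv b).injective
    rw [← lift_matrixRepOfBasis, lift_apply, map_zero, Finsupp.sum_fintype _ _ (by simp)]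
    exact hi.sum_smul_eq_zero (hw i)
  exact congrArg Subtype.val (LinearMap.congr_fun hx ⟨y, hy⟩)

theorem Matrix.sum_kronecker {α ι l m n p : Type*} [NonUnitalNonAssocSemiring α] (s : Finset ι)
    (A : ι → Matrix l m α) (B : Matrix n p α) : (∑ i ∈ s, A i) ⊗ₖ B = ∑ i ∈ s, A i ⊗ₖ B := by
  ext
  simp [Matrix.sum_apply, Finset.sum_mul]

noncomputable def matrixConv {G : Type*} [Group G] [Fintype G] {S T U : Type*} [Fintype T]
    (A : G → Matrix S T ℂ) (B : G → Matrix T U ℂ) (g : G) : Matrix S U ℂ :=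
  ∑ h, A h * B (h⁻¹ * g)

noncomputable def matrixFourier {G : Type*} [Fintype G] {S T n : Type*}
    (B : G → Matrix S T ℂ) (σ : G → Matrix n n ℂ) : Matrix (S × n) (T × n) ℂ :=
  ∑ g, B g ⊗ₖ σ g

theorem matrixFourier_matrixConv {G : Type*} [Group G] [Fintype G] {S T U n : Type*} [Fintype T]
    [Fintype n] {σ : G → Matrix n n ℂ} (hσ : ∀ g h, σ (g * h) = σ g * σ h)
    (A : G → Matrix S T ℂ) (B : G → Matrix T U ℂ) :
    matrixFourier (matrixConv A B) σ = matrixFourier A σ * matrixFourier B σ := by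
  calc matrixFourier (matrixConv A B) σ = ∑ h, ∑ g, (A h * B (h⁻¹ * g)) ⊗ₖ σ g := by
        simp only [matrixFourier, matrixConv, Matrix.sum_kronecker]
        exact Finset.sum_comm
    _ = ∑ h, ∑ k, (A h * B k) ⊗ₖ σ (h * k) :=
        Finset.sum_congr rfl fun h _ => Fintype.sum_equiv (Equiv.mulLeft h⁻¹) _ _ (by simp)
    _ = matrixFourier A σ * matrixFourier B σ := by
        simp only [matrixFourier, Matrix.sum_mul, Matrix.mul_sum, hσ, mul_kronecker_mul]
        exact Finset.sum_comm

theorem matrixFourier_smul {G : Type*} [Fintype G] {S T n : Type*} (c : ℂ)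
    (B : G → Matrix S T ℂ) (σ : G → Matrix n n ℂ) :
    matrixFourier (c • B) σ = c • matrixFourier B σ := by
  simp [matrixFourier, Finset.smul_sum, smul_kronecker]

theorem kernelFT_eq_matrixFourier {G : Type*} [Group G] [Fintype G] {S : Type*} [Fintype S]
    {k : ℕ} (A : G → Matrix S S ℂ) (σ : G → Matrix (Fin k) (Fin k) ℂ) :
    kernelFT A σ = matrixFourier A σ := by
  ext
  simp [kernelFT, matrixFourier, Matrix.sum_apply]

theorem matrixConv_replicateCol {G : Type*} [Group G] [Fintype G] {S ι : Type*} [Fintype S]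
    (A : G → Matrix S S ℂ) (u : G → S → ℂ) :
    matrixConv A (fun g => replicateCol ι (u g)) = fun g => replicateCol ι (groupConv A u g) := by
  ext
  simp [matrixConv, groupConv, Matrix.sum_apply, Matrix.mul_apply]

theorem eq_zero_of_matrixFourier_eq_zero {G : Type*} [Group G] [Fintype G] {ι : Type*}
    {d : ι → ℕ} {ρ : (i : ι) → G → Matrix (Fin (d i)) (Fin (d i)) ℂ}
    (hcomplete : ∀ (k : ℕ) (σ : G → Matrix (Fin k) (Fin k) ℂ),
      IsMatRep σ → IsIrredRep σ → ∃ i, RepEquiv σ (ρ i))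
    {S T : Type*} {B : G → Matrix S T ℂ} (hB : ∀ i, matrixFourier B (ρ i) = 0) : B = 0 := by
  ext g s t
  refine congrFun (eq_zero_of_sum_smul_eq_zero hcomplete (w := fun g => B g s t) fun i => ?_) g
  ext a c
  simpa [matrixFourier, Matrix.sum_apply] using congrFun (congrFun (hB i) (s, a)) (t, c)

theorem Matrix.exists_mulVec_eq_smul_of_mul_eq_smul {R m p : Type*} [CommSemiring R] [Fintype m]
    {K : Matrix m m R} {X : Matrix m p R} {c : R} (hX : X ≠ 0) (h : K * X = c • X) :
    ∃ ξ : m → R, ξ ≠ 0 ∧ K *ᵥ ξ = c • ξ := by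
  obtain ⟨j, hj⟩ : ∃ j, Xᵀ j ≠ 0 := by
    by_contra! hX'
    exact hX (transpose_eq_zero.mp (funext hX'))
  refine ⟨Xᵀ j, hj, funext fun i => ?_⟩
  simpa [Matrix.mulVec, dotProduct, Matrix.mul_apply, mul_comm] using congrFun (congrFun h i) j

theorem stmt8_general {G : Type*} [Group G] [Fintype G]
    {ι : Type*} (d : ι → ℕ)
    (ρ : (i : ι) → G → Matrix (Fin (d i)) (Fin (d i)) ℂ)
    (hrep : ∀ i, IsMatRep (ρ i))
    (hcomplete : ∀ (k : ℕ) (σ : G → Matrix (Fin k) (Fin k) ℂ),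
      IsMatRep σ → IsIrredRep σ → ∃! i : ι, RepEquiv σ (ρ i))
    {S : Type*} [Fintype S] (A : G → Matrix S S ℂ) (lam : ℂ)
    (hlam : ∃ u : G → S → ℂ, u ≠ 0 ∧ groupConv A u = lam • u) :
    ∃ i : ι, ∃ ξ : S × Fin (d i) → ℂ, ξ ≠ 0 ∧ (kernelFT A (ρ i)).mulVec ξ = lam • ξ := by
  obtain ⟨u, hu0, hu⟩ := hlam
  let U : G → Matrix S Unit ℂ := fun g => replicateCol Unit (u g)
  have hU (i : ι) :
      kernelFT A (ρ i) * matrixFourier U (ρ i) = lam • matrixFourier U (ρ i) := by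
    rw [kernelFT_eq_matrixFourier, ← matrixFourier_matrixConv (hrep i).2, matrixConv_replicateCol,
      hu, ← matrixFourier_smul]
    rfl
  by_contra! hno
  have hU0 : U = 0 := by
    refine eq_zero_of_matrixFourier_eq_zero (fun k σ h₁ h₂ => (hcomplete k σ h₁ h₂).exists)
      fun i => by_contra fun hX => ?_
    obtain ⟨ξ, hξ0, hξ⟩ := exists_mulVec_eq_smul_of_mul_eq_smul hX (hU i)
    exact hno i ξ hξ0 hξ
  exact hu0 (funext fun g => funext fun s => by
    simpa [U] using congrFun (congrFun (congrFun hU0 g) s) ())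

/-- Let `(ρ i)_{i : ι}` be a complete set of pairwise inequivalent
irreducible complex matrix representations of the finite group `G`, `S` a finite set,
and `A : G → ℂ^{S×S}` a convolution kernel.  If `λ` is an eigenvalue of the linear
map `u ↦ A * u` on functions `u : G → ℂ^S`, then there is `i` such that `λ` is an
eigenvalue of the `|S|d_ρ × |S|d_ρ` matrix `F(A)(ρ i)`. -/
theorem stmt8 {G : Type*} [Group G] [Fintype G]
    {ι : Type*} [Fintype ι] (d : ι → ℕ)
    (ρ : (i : ι) → G → Matrix (Fin (d i)) (Fin (d i)) ℂ)
    (hrep : ∀ i, IsMatRep (ρ i))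
    (hirr : ∀ i, IsIrredRep (ρ i))
    (hineq : ∀ i j, i ≠ j → ¬ RepEquiv (ρ i) (ρ j))
    (hcomplete : ∀ (k : ℕ) (σ : G → Matrix (Fin k) (Fin k) ℂ),
      IsMatRep σ → IsIrredRep σ → ∃! i : ι, RepEquiv σ (ρ i))
    {S : Type*} [Fintype S] (A : G → Matrix S S ℂ) (lam : ℂ)
    (hlam : ∃ u : G → S → ℂ, u ≠ 0 ∧ groupConv A u = lam • u) :
    ∃ i : ι, ∃ ξ : S × Fin (d i) → ℂ, ξ ≠ 0 ∧ (kernelFT A (ρ i)).mulVec ξ = lam • ξ :=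
  stmt8_general d ρ hrep hcomplete A lam hlam
end

section
/- Let G be a finite group, Ĝ a complete set of pairwise inequivalent irreducible complex matrix representations of G, S a finite set, and A : G → ℂ^{S×S} a convolution kernel. If λ ∈ ℂ is an eigenvalue of F(A)(ρ) for some ρ ∈ Ĝ, then λ is an eigenvalue of the linear map u ↦ A * u on the space of functions u : G → ℂ^S, and the corresponding eigenspace { v : A * v = λ v } has dimension at least d_ρ. -/
private lemma sum3 {α β γ M : Type*} [Fintype α] [Fintype β] [Fintype γ] [AddCommMonoid M]
    (f : α → β → γ → M) :
    ∑ a, ∑ b, ∑ c, f a b c = ∑ b, ∑ c, ∑ a, f a b c :=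
  calc ∑ a, ∑ b, ∑ c, f a b c = ∑ b, ∑ a, ∑ c, f a b c := Finset.sum_comm
    _ = ∑ b, ∑ c, ∑ a, f a b c := Finset.sum_congr rfl fun _ _ => Finset.sum_comm

private lemma sum4 {α β γ δ M : Type*} [Fintype α] [Fintype β] [Fintype γ] [Fintype δ]
    [AddCommMonoid M] (f : α → β → γ → δ → M) :
    ∑ a, ∑ b, ∑ c, ∑ e, f a b c e = ∑ e, ∑ a, ∑ b, ∑ c, f a b c e :=
  calc ∑ a, ∑ b, ∑ c, ∑ e, f a b c e
      = ∑ a, ∑ b, ∑ e, ∑ c, f a b c e :=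
        Finset.sum_congr rfl fun _ _ => Finset.sum_congr rfl fun _ _ => Finset.sum_comm
    _ = ∑ a, ∑ e, ∑ b, ∑ c, f a b c e :=
        Finset.sum_congr rfl fun _ _ => Finset.sum_comm
    _ = ∑ e, ∑ a, ∑ b, ∑ c, f a b c e := Finset.sum_comm

/-- Let `(ρ i)_{i : ι}` be a complete set of pairwise inequivalent
irreducible complex matrix representations of the finite group `G`, `S` a finite set,
and `A : G → ℂ^{S×S}` a convolution kernel.  If `λ` is an eigenvalue of `F(A)(ρ i)`
for some `i`, then `λ` is an eigenvalue of the linear map `u ↦ A * u` on functions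
`u : G → ℂ^S`, and the eigenspace `{v : A*v = λ v}` has dimension at least `d i`
(expressed via `d i` linearly independent eigenvectors). -/
theorem stmt9 {G : Type*} [Group G] [Fintype G]
    {ι : Type*} [Fintype ι] (d : ι → ℕ)
    (ρ : (i : ι) → G → Matrix (Fin (d i)) (Fin (d i)) ℂ)
    (hrep : ∀ i, IsMatRep (ρ i))
    (hirr : ∀ i, IsIrredRep (ρ i))
    (hineq : ∀ i j, i ≠ j → ¬ RepEquiv (ρ i) (ρ j))
    (hcomplete : ∀ (k : ℕ) (σ : G → Matrix (Fin k) (Fin k) ℂ),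
      IsMatRep σ → IsIrredRep σ → ∃! i : ι, RepEquiv σ (ρ i))
    {S : Type*} [Fintype S] (A : G → Matrix S S ℂ) (lam : ℂ)
    (i : ι) (ξ : S × Fin (d i) → ℂ) (hξ : ξ ≠ 0)
    (heig : (kernelFT A (ρ i)).mulVec ξ = lam • ξ) :
    (∃ v : G → S → ℂ, v ≠ 0 ∧ groupConv A v = lam • v) ∧
    (∃ vs : Fin (d i) → (G → S → ℂ),
      LinearIndependent ℂ vs ∧ ∀ k, groupConv A (vs k) = lam • vs k) := by

  classical
  obtain ⟨hu, hmul⟩ := hrep i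
  set σ := ρ i with hσdef
  have hone : σ 1 = 1 := by
    have h := hmul 1 1
    rw [one_mul] at h
    exact (hu 1).mul_left_cancel (by rw [← h, mul_one])
  -- coordinatewise eigenvalue equation
  have heig' : ∀ (s : S) (l : Fin (d i)),
      ∑ s' : S, ∑ m : Fin (d i), (∑ h : G, A h s s' * σ h l m) * ξ (s', m)
        = lam * ξ (s, l) := by
    intro s l
    have h := congrFun heig (s, l)
    simpa [Matrix.mulVec, dotProduct, kernelFT, Fintype.sum_prod_type,
      Finset.sum_mul] using h
  -- the eigenvectors
  set vs : Fin (d i) → G → S → ℂ :=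
    fun j g s => ∑ m, ξ (s, m) * σ g⁻¹ j m with hvs
  have hvseig : ∀ j, groupConv A (vs j) = lam • vs j := by
    intro j
    funext g s
    show ∑ h : G, ∑ s' : S, A h s s' * ∑ m, ξ (s', m) * σ (h⁻¹ * g)⁻¹ j m
        = lam * ∑ m, ξ (s, m) * σ g⁻¹ j m
    have key : ∀ (h : G) (m : Fin (d i)),
        σ (h⁻¹ * g)⁻¹ j m = ∑ l, σ g⁻¹ j l * σ h l m := by
      intro h m
      rw [show (h⁻¹ * g)⁻¹ = g⁻¹ * h by group, hmul, Matrix.mul_apply]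
    simp only [key, Finset.mul_sum]
    rw [sum4 (fun h s' m l => A h s s' * (ξ (s', m) * (σ g⁻¹ j l * σ h l m)))]
    refine Finset.sum_congr rfl fun l _ => ?_
    have step : ∑ h : G, ∑ s' : S, ∑ m, A h s s' * (ξ (s', m) * (σ g⁻¹ j l * σ h l m))
        = (∑ s' : S, ∑ m, (∑ h : G, A h s s' * σ h l m) * ξ (s', m)) * σ g⁻¹ j l := by
      simp only [Finset.sum_mul]
      rw [sum3 (fun h s' m => A h s s' * (ξ (s', m) * (σ g⁻¹ j l * σ h l m)))]
      refine Finset.sum_congr rfl fun s' _ => Finset.sum_congr rfl fun m _ =>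
        Finset.sum_congr rfl fun h _ => by ring
    rw [step, heig' s l]
    ring
  -- a witness with a nonzero coordinate
  obtain ⟨p, hp⟩ : ∃ p, ξ p ≠ 0 := by
    by_contra h
    push_neg at h
    exact hξ (funext h)
  have hvsne : vs p.2 ≠ 0 := by
    intro h0
    have h1 := congrFun (congrFun h0 1) p.1
    simp only [hvs, Pi.zero_apply] at h1
    rw [inv_one, hone] at h1
    simp only [Matrix.one_apply, mul_ite, mul_one, mul_zero,
      Finset.sum_ite_eq, Finset.mem_univ, if_true] at h1
    exact hp h1
  refine ⟨⟨vs p.2, hvsne, hvseig p.2⟩, vs, ?_, hvseig⟩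
  -- linear independence
  rw [Fintype.linearIndependent_iff]
  intro c hc j
  have hc' : ∀ (g : G) (s : S), ∑ j', ∑ m, c j' * (ξ (s, m) * σ g⁻¹ j' m) = 0 := by
    intro g s
    have h := congrFun (congrFun hc g) s
    simpa [hvs, Finset.sum_apply, Finset.mul_sum] using h
  have hc2 : ∀ (g : G) (s : S), ∑ j', ∑ m, ξ (s, m) * (c j' * σ g j' m) = 0 := by
    intro g s
    have h := hc' g⁻¹ s
    rw [inv_inv] at h
    rw [← h]
    exact Finset.sum_congr rfl fun j' _ => Finset.sum_congr rfl fun m _ => by ring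
  -- the invariant subspace spanned by the orbit of w := ξ (p.1, ·)
  set w : Fin (d i) → ℂ := fun m => ξ (p.1, m) with hw
  set W : Submodule ℂ (Fin (d i) → ℂ) :=
    Submodule.span ℂ (Set.range fun g : G => (σ g).mulVec w) with hW
  have hinv : ∀ g : G, ∀ x ∈ W, (σ g).mulVec x ∈ W := by
    intro g x hx
    refine Submodule.span_induction ?_ ?_ ?_ ?_ hx
    · rintro x ⟨h, rfl⟩
      rw [Matrix.mulVec_mulVec, ← hmul]
      exact Submodule.subset_span ⟨g * h, rfl⟩
    · rw [Matrix.mulVec_zero]; exact W.zero_mem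
    · intro x y _ _ hx hy
      rw [Matrix.mulVec_add]; exact W.add_mem hx hy
    · intro a x _ hx
      rw [Matrix.mulVec_smul]; exact W.smul_mem a hx
  have hwW : w ∈ W := by
    have : (σ 1).mulVec w = w := by rw [hone, Matrix.one_mulVec]
    exact this ▸ Submodule.subset_span ⟨1, rfl⟩
  have hWne : W ≠ ⊥ := by
    intro hbot
    rw [hbot, Submodule.mem_bot] at hwW
    exact hp (by simpa [hw] using congrFun hwW p.2)
  have hWtop : W = ⊤ := (hirr i W hinv).resolve_left hWne
  have hdot : ∀ x ∈ W, ∑ m, c m * x m = 0 := by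
    intro x hx
    refine Submodule.span_induction ?_ ?_ ?_ ?_ hx
    · rintro x ⟨g, rfl⟩
      have h := hc2 g p.1
      rw [← h]
      simp only [Matrix.mulVec, dotProduct, Finset.mul_sum]
      exact Finset.sum_congr rfl fun j' _ => Finset.sum_congr rfl fun m _ => by
        simp [hw]; ring
    · simp
    · intro x y _ _ hx hy
      simp only [Pi.add_apply, mul_add, Finset.sum_add_distrib, hx, hy, add_zero]
    · intro a x _ hx
      simp only [Pi.smul_apply, smul_eq_mul]
      rw [show ∑ m, c m * (a * x m) = a * ∑ m, c m * x m by
        rw [Finset.mul_sum]; exact Finset.sum_congr rfl fun m _ => by ring, hx, mul_zero]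
  have h := hdot (Pi.single j 1) (hWtop ▸ Submodule.mem_top)
  simpa [Pi.single_apply, mul_ite, Finset.sum_ite_eq] using h
end

section
/- Let (Y, Σ, P) be a probability space, G a finite group, O a finite set, Φ : Y → Y a measurable map, and ψ : Y → ℂ^O a measurable map with each component ψ_o and each ψ_o ∘ Φ square-integrable with respect to P. Assume (A1) G acts measurably on Y from the left and acts freely on O from the right; (A2) ψ_o(g·y) = ψ_{o·g}(y) for all g ∈ G, o ∈ O, y ∈ Y; (A3) Φ(g·y) = g·Φ(y) for all g ∈ G, y ∈ Y; (A4) P is invariant under the action, i.e., the pushforward of P under y ↦ g·y equals P for all g ∈ G. Define the loss ℓ(K) := ∫_Y ‖K ψ(y) − ψ(Φ(y))‖² dP(y) for K ∈ ℂ^{O×O}. Then for every K ∈ ℂ^{O×O} there exists an equivariant matrix K' ∈ ℂ^{O×O} (i.e., K'_{o,o'} = K'_{o·g, o'·g} for all g, o, o') with ℓ(K') ≤ ℓ(K). -/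
open MeasureTheory

/-- The EDMD loss `ℓ(K) = ∫_Y ‖K ψ(y) − ψ(Φ(y))‖² dP(y)`, with the Euclidean
norm on `ℂ^O` written as `∑_o ‖·‖²`. -/
noncomputable def edmdLoss {Y O : Type*} [MeasurableSpace Y] [Fintype O]
    (P : Measure Y) (Φ : Y → Y) (ψ : Y → O → ℂ) (K : Matrix O O ℂ) : ℝ :=
  ∫ y, ∑ o : O, ‖K.mulVec (ψ y) o - ψ (Φ y) o‖ ^ 2 ∂P

/-! Conjugating `K` by the permutation `o ↦ o·g` does not change the loss: by (A2) and (A3) the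
integrand of the conjugated matrix at `g·y` is the integrand of `K` at `y` with its terms
permuted, and by (A4) the substitution `y ↦ g·y` preserves the integral. The loss is convex in
`K`, so by Jensen's inequality the average of the conjugates of `K`, which is equivariant, has
loss at most `ℓ(K)`. -/

open Matrix

theorem ConvexOn.finsetSum {𝕜 E β ι : Type*} [Semiring 𝕜] [PartialOrder 𝕜] [AddCommMonoid E]
    [SMul 𝕜 E] [AddCommMonoid β] [PartialOrder β] [IsOrderedAddMonoid β] [Module 𝕜 β]
    {s : Set E} (t : Finset ι) {f : ι → E → β} (hs : Convex 𝕜 s)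
    (hf : ∀ i ∈ t, ConvexOn 𝕜 s (f i)) : ConvexOn 𝕜 s fun x => ∑ i ∈ t, f i x := by
  classical
  induction t using Finset.induction_on with
  | empty => simpa using convexOn_const (0 : β) hs
  | insert i t hi ih =>
    simp_rw [Finset.sum_insert hi]
    exact (hf i (Finset.mem_insert_self i t)).add
      (ih fun j hj => hf j (Finset.mem_insert_of_mem hj))

theorem convexOn_integral {E α : Type*} [AddCommGroup E] [Module ℝ E] [MeasurableSpace α]
    {μ : Measure α} {s : Set E} {f : E → α → ℝ} (hs : Convex ℝ s)
    (hf : ∀ a, ConvexOn ℝ s (f · a)) (hint : ∀ x ∈ s, Integrable (f x) μ) :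
    ConvexOn ℝ s fun x => ∫ a, f x a ∂μ := by
  refine ⟨hs, fun x hx y hy a b ha hb hab => ?_⟩
  calc ∫ t, f (a • x + b • y) t ∂μ ≤ ∫ t, a * f x t + b * f y t ∂μ :=
        integral_mono (hint _ (hs hx hy ha hb hab))
          (((hint x hx).const_mul a).add ((hint y hy).const_mul b))
          fun t => (hf t).2 hx hy ha hb hab
    _ = a • ∫ t, f x t ∂μ + b • ∫ t, f y t ∂μ := by
        rw [integral_add ((hint x hx).const_mul a) ((hint y hy).const_mul b),
          integral_const_mul, integral_const_mul, smul_eq_mul, smul_eq_mul]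

theorem convexOn_norm_sub_sq {E F : Type*} [SeminormedAddCommGroup E] [NormedSpace ℝ E]
    [AddCommGroup F] [Module ℝ F] (L : F →ₗ[ℝ] E) (c : E) :
    ConvexOn ℝ Set.univ fun x => ‖L x - c‖ ^ 2 := by
  have hsq : ConvexOn ℝ Set.univ fun z : E => ‖z‖ ^ 2 :=
    convexOn_univ_norm.pow (fun z _ => norm_nonneg z) 2
  simpa [Function.comp_def, sub_eq_neg_add] using (hsq.translate_right (-c)).comp_linearMap L

section EDMD

variable {Y O : Type*} [Fintype O]

noncomputable def edmdIntegrand (Φ : Y → Y) (ψ : Y → O → ℂ) (K : Matrix O O ℂ) (y : Y) : ℝ :=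
  ∑ o, ‖(K *ᵥ ψ y) o - ψ (Φ y) o‖ ^ 2

theorem convexOn_edmdIntegrand (Φ : Y → Y) (ψ : Y → O → ℂ) (y : Y) :
    ConvexOn ℝ Set.univ fun K => edmdIntegrand Φ ψ K y :=
  ConvexOn.finsetSum _ convex_univ fun o _ =>
    convexOn_norm_sub_sq ((LinearMap.proj o).comp ((mulVecBilin ℝ ℂ).flip (ψ y))) _

theorem edmdIntegrand_submatrix_apply_eq (τ : Y → Y) (e : O ≃ O) {Φ : Y → Y} {ψ : Y → O → ℂ}
    (hψτ : ∀ y o, ψ (τ y) o = ψ y (e o)) (hΦτ : ∀ y, Φ (τ y) = τ (Φ y)) (K : Matrix O O ℂ)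
    (y : Y) : edmdIntegrand Φ ψ (K.submatrix e e) (τ y) = edmdIntegrand Φ ψ K y := by
  have hψ' : ∀ y, ψ (τ y) = ψ y ∘ e := fun y => funext (hψτ y)
  simp only [edmdIntegrand, hΦτ, hψ', submatrix_mulVec_equiv, Function.comp_assoc,
    Equiv.self_comp_symm, Function.comp_id, Function.comp_apply]
  exact e.sum_comp fun o => ‖(K *ᵥ ψ y) o - ψ (Φ y) o‖ ^ 2

variable [MeasurableSpace Y] {P : Measure Y} {Φ : Y → Y} {ψ : Y → O → ℂ}

theorem integrable_edmdIntegrand (hψL2 : ∀ o, MemLp (fun y => ψ y o) 2 P)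
    (hψΦL2 : ∀ o, MemLp (fun y => ψ (Φ y) o) 2 P) (K : Matrix O O ℂ) :
    Integrable (edmdIntegrand Φ ψ K) P := by
  refine integrable_finsetSum _ fun o _ => ?_
  have hKψ : MemLp (fun y => (K *ᵥ ψ y) o) 2 P :=
    memLp_finsetSum _ fun o' _ => (hψL2 o').const_mul (K o o')
  exact (hKψ.sub (hψΦL2 o)).norm.integrable_sq

theorem convexOn_edmdLoss (hψL2 : ∀ o, MemLp (fun y => ψ y o) 2 P)
    (hψΦL2 : ∀ o, MemLp (fun y => ψ (Φ y) o) 2 P) :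
    ConvexOn ℝ Set.univ (edmdLoss P Φ ψ) :=
  convexOn_integral convex_univ (convexOn_edmdIntegrand Φ ψ)
    fun K _ => integrable_edmdIntegrand hψL2 hψΦL2 K

theorem edmdLoss_submatrix (τ : Y → Y) (hτ : MeasurePreserving τ P P) (e : O ≃ O)
    (hψτ : ∀ y o, ψ (τ y) o = ψ y (e o)) (hΦτ : ∀ y, Φ (τ y) = τ (Φ y))
    (hψL2 : ∀ o, MemLp (fun y => ψ y o) 2 P) (hψΦL2 : ∀ o, MemLp (fun y => ψ (Φ y) o) 2 P)
    (K : Matrix O O ℂ) : edmdLoss P Φ ψ (K.submatrix e e) = edmdLoss P Φ ψ K := by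
  have hmeas := (integrable_edmdIntegrand hψL2 hψΦL2 (K.submatrix e e)).aestronglyMeasurable
  calc ∫ y, edmdIntegrand Φ ψ (K.submatrix e e) y ∂P
      = ∫ y, edmdIntegrand Φ ψ (K.submatrix e e) y ∂(P.map τ) := by rw [hτ.map_eq]
    _ = ∫ y, edmdIntegrand Φ ψ (K.submatrix e e) (τ y) ∂P :=
        integral_map hτ.aemeasurable (by rwa [hτ.map_eq])
    _ = ∫ y, edmdIntegrand Φ ψ K y ∂P := by
        simp_rw [edmdIntegrand_submatrix_apply_eq τ e hψτ hΦτ]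

end EDMD

section RightAction

variable {G O : Type*} (act : O → G → O)

def rightActPerm [Group G] (h1 : ∀ o, act o 1 = o)
    (h2 : ∀ o g h, act (act o g) h = act o (g * h)) (g : G) : Equiv.Perm O where
  toFun o := act o g
  invFun o := act o g⁻¹
  left_inv o := by simp only [h2, mul_inv_cancel, h1]
  right_inv o := by simp only [h2, inv_mul_cancel, h1]

def Matrix.IsEquivariant {R : Type*} (K : Matrix O O R) : Prop :=
  ∀ (g : G) (o o' : O), K o o' = K (act o g) (act o' g)

variable {act}

theorem Matrix.IsEquivariant.smul {R S : Type*} [SMul S R] {K : Matrix O O R}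
    (hK : K.IsEquivariant act) (c : S) : (c • K).IsEquivariant act :=
  fun g o o' => by simp only [smul_apply, hK g o o']

theorem Matrix.isEquivariant_sum_submatrix [Group G] [Fintype G] {R : Type*} [AddCommMonoid R]
    (h2 : ∀ o g h, act (act o g) h = act o (g * h)) (K : Matrix O O R) :
    (∑ h : G, K.submatrix (act · h) (act · h)).IsEquivariant act := fun g o o' => by
  simp only [sum_apply, submatrix_apply, h2]
  exact (Equiv.sum_comp (Equiv.mulLeft g) fun h => K (act o h) (act o' h)).symm

end RightAction

theorem stmt12_general {Y : Type*} [MeasurableSpace Y] (P : Measure Y)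
    {G : Type*} [Group G] [Fintype G]
    {O : Type*} [Fintype O]
    (actY : G → Y → Y)
    (hYmeas : ∀ g, Measurable (actY g))
    (actO : O → G → O)
    (hO1 : ∀ o, actO o 1 = o)
    (hO2 : ∀ o g h, actO (actO o g) h = actO o (g * h))
    (Φ : Y → Y)
    (ψ : Y → O → ℂ)
    (hψL2 : ∀ o, MemLp (fun y => ψ y o) 2 P)
    (hψΦL2 : ∀ o, MemLp (fun y => ψ (Φ y) o) 2 P)
    (hA2 : ∀ g o y, ψ (actY g y) o = ψ y (actO o g))
    (hA3 : ∀ g y, Φ (actY g y) = actY g (Φ y))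
    (hA4 : ∀ g, Measure.map (actY g) P = P)
    (K : Matrix O O ℂ) :
    ∃ K' : Matrix O O ℂ,
      (∀ (g : G) (o o' : O), K' o o' = K' (actO o g) (actO o' g)) ∧
      edmdLoss P Φ ψ K' ≤ edmdLoss P Φ ψ K := by
  set e := rightActPerm actO hO1 hO2
  set c : ℝ := (Fintype.card G : ℝ)⁻¹
  have hc : ∑ _g : G, c = 1 := by simp [c]
  have hconj (g : G) : edmdLoss P Φ ψ (K.submatrix (e g) (e g)) = edmdLoss P Φ ψ K :=
    edmdLoss_submatrix (actY g) ⟨hYmeas g, hA4 g⟩ (e g) (fun y o => hA2 g o y) (hA3 g)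
      hψL2 hψΦL2 K
  refine ⟨∑ g, c • K.submatrix (e g) (e g), ?_, ?_⟩
  · rw [← Finset.smul_sum]
    exact (isEquivariant_sum_submatrix hO2 K).smul c
  · calc edmdLoss P Φ ψ (∑ g, c • K.submatrix (e g) (e g))
        ≤ ∑ g, c • edmdLoss P Φ ψ (K.submatrix (e g) (e g)) :=
          (convexOn_edmdLoss hψL2 hψΦL2).map_sum_le (fun _ _ => by positivity) hc
            fun _ _ => Set.mem_univ _
      _ = edmdLoss P Φ ψ K := by simp only [hconj, ← Finset.sum_smul, hc, one_smul]

/-- **Theorem 3.1 of the paper.** Let `(Y, Σ, P)` be a probability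
space, `G` a finite group, `O` a finite set, `Φ : Y → Y` measurable, and
`ψ : Y → ℂ^O` measurable with each `ψ_o` and `ψ_o ∘ Φ` square-integrable.  Assume
(A1) `G` acts measurably on `Y` from the left and freely on `O` from the right;
(A2) `ψ_o(g·y) = ψ_{o·g}(y)`; (A3) `Φ(g·y) = g·Φ(y)`; (A4) the pushforward of `P`
under `y ↦ g·y` equals `P`.  Then for every `K ∈ ℂ^{O×O}` there exists an
equivariant matrix `K'` with `ℓ(K') ≤ ℓ(K)`. -/
theorem stmt12 {Y : Type*} [MeasurableSpace Y] (P : Measure Y) [IsProbabilityMeasure P]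
    {G : Type*} [Group G] [Fintype G]
    {O : Type*} [Fintype O]
    (actY : G → Y → Y)
    (hY1 : ∀ y, actY 1 y = y)
    (hY2 : ∀ g h y, actY g (actY h y) = actY (g * h) y)
    (hYmeas : ∀ g, Measurable (actY g))
    (actO : O → G → O)
    (hO1 : ∀ o, actO o 1 = o)
    (hO2 : ∀ o g h, actO (actO o g) h = actO o (g * h))
    (hOfree : ∀ o g, actO o g = o → g = 1)
    (Φ : Y → Y) (hΦmeas : Measurable Φ)
    (ψ : Y → O → ℂ)
    (hψmeas : ∀ o, Measurable fun y => ψ y o)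
    (hψL2 : ∀ o, MemLp (fun y => ψ y o) 2 P)
    (hψΦL2 : ∀ o, MemLp (fun y => ψ (Φ y) o) 2 P)
    (hA2 : ∀ g o y, ψ (actY g y) o = ψ y (actO o g))
    (hA3 : ∀ g y, Φ (actY g y) = actY g (Φ y))
    (hA4 : ∀ g, Measure.map (actY g) P = P)
    (K : Matrix O O ℂ) :
    ∃ K' : Matrix O O ℂ,
      (∀ (g : G) (o o' : O), K' o o' = K' (actO o g) (actO o' g)) ∧
      edmdLoss P Φ ψ K' ≤ edmdLoss P Φ ψ K :=
  stmt12_general P actY hYmeas actO hO1 hO2 Φ ψ hψL2 hψΦL2 hA2 hA3 hA4 K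
end
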